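/- arXiv:1106.4106 — 10 statements merged into one kernel-verified Lean document; each statement's English description precedes it below -/
import Mathlib

section
/- There is no square-free P_4-word of length 16. -/
/-!
Square-freeness and being a `P₄`-walk both pass from `a :: w` to `w`, and `a :: w` is square-free
exactly when `w` is and `a :: w` has no square prefix. So every square-free walk of length `n + 1`
arises by prepending a letter to one of length `n`, and a level-by-level enumeration (its sizes are
1, 4, 6, 10, …, 6, 4, 2 for lengths 0 to 15) dies out at length 16.
-/

def SqFree {α : Type*} (w : List α) : Prop :=
  ∀ u : List α, u ≠ [] → ¬ (u ++ u) <:+: w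

/-- Adjacency in the path `P₄` on `{0,1,2,3}` with edges `01`, `12`, `23`. -/
def P4Adj (a b : Fin 4) : Prop := a.val + 1 = b.val ∨ b.val + 1 = a.val

section SquareFree

variable {α : Type*}

def HasSquarePrefix (w : List α) : Prop :=
  ∃ u : List α, u ≠ [] ∧ u ++ u <+: w

theorem hasSquarePrefix_iff {w : List α} :
    HasSquarePrefix w ↔ ∃ k ∈ List.range w.length, w.take (k + 1) <+: w.drop (k + 1) := by
  constructor
  · rintro ⟨u, hu, t, rfl⟩
    obtain ⟨k, hk⟩ := Nat.exists_eq_add_one.mpr (List.length_pos_iff.mpr hu)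
    refine ⟨k, List.mem_range.mpr (by simp only [List.length_append]; omega), ?_⟩
    rw [← hk, List.append_assoc, List.take_left, List.drop_left]
    exact List.prefix_append u t
  · rintro ⟨k, hk, t, ht⟩
    have hw : w ≠ [] := List.ne_nil_of_length_pos (List.mem_range.mp hk).pos
    refine ⟨w.take (k + 1), by simpa using hw, t, ?_⟩
    rw [List.append_assoc, ht, List.take_append_drop]

instance [DecidableEq α] : DecidablePred (HasSquarePrefix (α := α)) :=
  fun _ => decidable_of_iff _ hasSquarePrefix_iff.symm

theorem sqFree_cons_iff {a : α} {w : List α} :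
    SqFree (a :: w) ↔ SqFree w ∧ ¬ HasSquarePrefix (a :: w) := by
  simp only [SqFree, HasSquarePrefix, List.infix_cons_iff, not_or, not_exists, not_and]
  exact ⟨fun h => ⟨fun u hu => (h u hu).2, fun u hu => (h u hu).1⟩,
    fun h u hu => ⟨h.2 u hu, h.1 u hu⟩⟩

end SquareFree

section Enumeration

variable {α : Type*} [DecidableEq α] (R : α → α → Prop) [DecidableRel R] (alphabet : List α)

def sqFreeChains : ℕ → List (List α)
  | 0 => [[]]
  | n + 1 => (sqFreeChains n).flatMap fun w =>
      (alphabet.map (· :: w)).filter fun v => v.IsChain R ∧ ¬ HasSquarePrefix v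

variable {R alphabet}

theorem mem_sqFreeChains (halphabet : ∀ a, a ∈ alphabet) :
    ∀ {w : List α}, w.IsChain R → SqFree w → w ∈ sqFreeChains R alphabet w.length
  | [], _, _ => List.mem_singleton_self _
  | a :: w, hchain, hsq => by
    have hsq' := sqFree_cons_iff.mp hsq
    simp only [List.length_cons, sqFreeChains, List.mem_flatMap, List.mem_filter, List.mem_map]
    exact ⟨w, mem_sqFreeChains halphabet hchain.tail hsq'.1, ⟨a, halphabet a, rfl⟩,
      decide_eq_true ⟨hchain, hsq'.2⟩⟩

end Enumeration

instance : DecidableRel P4Adj := fun _ _ => inferInstanceAs (Decidable (_ ∨ _))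

/-- There is no square-free `P₄`-word of length 16. -/
theorem no_squarefree_P4_word_length_16 (w : List (Fin 4))
    (hwalk : w.Chain' P4Adj) (hlen : w.length = 16) : ¬ SqFree w := by
  intro hsq
  have hmem := mem_sqFreeChains List.mem_finRange hwalk hsq
  rw [hlen, show sqFreeChains P4Adj (List.finRange 4) 16 = [] by decide +kernel] at hmem
  exact List.not_mem_nil hmem
end

section
/- Every infinite P_4-word contains a square, i.e., there is no infinite square-free walk on the path P_4. -/
namespace List

variable {α : Type*}

def SquareFree (l : List α) : Prop := ∀ u : List α, u ++ u <:+: l → u = []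

theorem SquareFree.of_infix {l₁ l₂ : List α} (h : l₁ <:+: l₂) (hl₂ : l₂.SquareFree) :
    l₁.SquareFree :=
  fun u hu => hl₂ u (hu.trans h)

def HasSquarePrefix (l : List α) : Prop :=
  ∃ k ∈ range' 1 (l.length / 2), (l.drop k).take k = l.take k

instance [DecidableEq α] (l : List α) : Decidable l.HasSquarePrefix := by
  unfold HasSquarePrefix
  infer_instance

theorem SquareFree.not_hasSquarePrefix {l : List α} (hl : l.SquareFree) :
    ¬ l.HasSquarePrefix := by
  rintro ⟨k, hk, hsq⟩
  rw [mem_range'_1] at hk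
  have hu : l.take k ++ l.take k <:+: l := by
    nth_rw 2 [← hsq]
    rw [← take_add]
    exact (take_prefix _ l).isInfix
  have := congrArg length (hl _ hu)
  simp only [length_take, length_nil] at this
  omega

variable (r : α → α → Prop) [DecidableRel r] [DecidableEq α]

/- A square in `a :: t` lies in `t` or is a prefix of `a :: t`, so when chains grow by prepending
letters only prefixes need to be tested. -/
def squareFreeChains (A : List α) : ℕ → List (List α)
  | 0 => [[]]
  | n + 1 => (squareFreeChains A n).flatMap fun t =>
      (A.filter fun a => (∀ b ∈ t.head?, r a b) ∧ ¬ (a :: t).HasSquarePrefix).map (· :: t)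

theorem mem_squareFreeChains {A : List α} (hA : ∀ a, a ∈ A) {l : List α}
    (hr : l.IsChain r) (hl : l.SquareFree) : l ∈ squareFreeChains r A l.length := by
  induction l with
  | nil => simp [squareFreeChains]
  | cons a t ih =>
    rw [isChain_cons] at hr
    have ht : t ∈ squareFreeChains r A t.length :=
      ih hr.2 (hl.of_infix (suffix_cons a t).isInfix)
    simp only [squareFreeChains, length_cons, mem_flatMap, mem_map, mem_filter]
    exact ⟨t, ht, a, ⟨hA a, by simpa using ⟨hr.1, hl.not_hasSquarePrefix⟩⟩, rfl⟩

end List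

theorem exists_square_of_not_squareFree_map_range {α : Type*} (w : ℕ → α) (n : ℕ)
    (h : ¬ ((List.range n).map w).SquareFree) :
    ∃ m k, 0 < k ∧ ∀ i < k, w (m + i) = w (m + k + i) := by
  simp only [List.SquareFree, not_forall] at h
  obtain ⟨u, ⟨s, t, hst⟩, hu⟩ := h
  refine ⟨s.length, u.length, List.length_pos_iff.mpr hu, fun i hi => ?_⟩
  have hlen := congrArg List.length hst
  simp only [List.length_append, List.length_map, List.length_range] at hlen
  have hw : ∀ j < n, (s ++ (u ++ u) ++ t)[j]? = some (w j) := by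
    intro j hj
    simp [hst, hj]
  have hfst := hw (s.length + i) (by omega)
  have hsnd := hw (s.length + (u.length + i)) (by omega)
  simp only [List.append_assoc, le_add_iff_nonneg_right, zero_le, List.getElem?_append_right,
    add_tsub_cancel_left, hi, List.getElem?_append_left, getElem?_pos, Option.some.injEq]
    at hfst hsnd
  rw [add_assoc, ← hfst, ← hsnd]

instance inst_s5 : DecidableRel P4Adj := fun a b =>
  inferInstanceAs (Decidable (a.val + 1 = b.val ∨ b.val + 1 = a.val))

theorem squareFreeChains_P4Adj_sixteen :
    List.squareFreeChains P4Adj (List.finRange 4) 16 = [] := by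
  decide

/-- Every infinite `P₄`-word contains a square: a factor `uu` with `u` nonempty,
i.e. positions `m, k` with `0 < k` and `w (m+i) = w (m+k+i)` for all `i < k`. -/
theorem infinite_P4_word_contains_square (w : ℕ → Fin 4)
    (hwalk : ∀ n, P4Adj (w n) (w (n + 1))) :
    ∃ m k, 0 < k ∧ ∀ i < k, w (m + i) = w (m + k + i) := by
  apply exists_square_of_not_squareFree_map_range w 16
  intro hsf
  have hchain : ((List.range 16).map w).IsChain P4Adj :=
    (List.isChain_map w).2 ((List.isChain_range_succ _ 15).2 fun m _ => hwalk m)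
  simpa [squareFreeChains_P4Adj_sixteen] using
    List.mem_squareFreeChains P4Adj List.mem_finRange hchain hsf
end

section
/- The infinite word τ^ω(0) obtained by iterating the morphism τ with τ(0)=012, τ(1)=02, τ(2)=1 starting from 0 (the Thue word) is square-free. -/
/-!
The Thue word is the first difference sequence of the Thue–Morse word `t`: its `n`-th letter is
`1 + t n - t (n + 1)`, reading booleans as `0, 1`. If it contained a square of length `2k` at `m`,
then `t (m + j) - t (m + k + j)` would be a constant `c` for `j ≤ k`; since the Thue–Morse word is
overlap-free, `c ≠ 0`, and then `t m - t (m + 2k) = 2c` is impossible.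

The Thue–Morse word is overlap-free by induction on the period `k`: for even `k` an overlap halves,
since `t (2n + r) = r xor t n`; for odd `k`, two equal neighbours `t i = t (i + 1)` only occur at
odd `i`, so the overlap cannot contain a pair of them, and an alternating block of odd length has
different ends.
-/


/-- An infinite word `w : ℕ → α` is square-free if it contains no square `uu`
with `u` nonempty, i.e. there are no positions `m, k` with `0 < k` and
`w (m+i) = w (m+k+i)` for all `i < k`. -/
def InfSqFree {α : Type*} (w : ℕ → α) : Prop :=
  ∀ m k, 0 < k → ∃ i < k, w (m + i) ≠ w (m + k + i)

/-- The Thue morphism `τ(0)=012`, `τ(1)=02`, `τ(2)=1`. -/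
def tau : Fin 3 → List (Fin 3)
  | 0 => [0, 1, 2]
  | 1 => [0, 2]
  | 2 => [1]

/-- The Thue word `τ^ω(0)`, the infinite fixed point obtained by iterating `τ`
starting from the letter `0` (the `n`-th letter is the `n`-th letter of
`τ^(n+1)(0)`, which is a prefix of all later iterates). -/
def thue (n : ℕ) : Fin 3 := ((fun l => l.flatMap tau)^[n + 1] [0]).getD n 0

def InfOverlapFree {α : Type*} (w : ℕ → α) : Prop :=
  ∀ m k, 0 < k → ∃ i ≤ k, w (m + i) ≠ w (m + k + i)

theorem eq_xor_parity_of_alternating {f : ℕ → Bool} {m k : ℕ}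
    (h : ∀ j < k, f (m + j) ≠ f (m + j + 1)) : f (m + k) = xor (decide (k % 2 = 1)) (f m) := by
  induction k with
  | zero => simp
  | succ k ih =>
    rw [← add_assoc, Bool.eq_not.2 (h k (by omega)).symm, ih fun j hj => h j (by omega)]
    rcases Nat.mod_two_eq_zero_or_one k with hk | hk <;> simp [hk, Nat.add_mod]

def thueMorse (n : ℕ) : Bool :=
  if n = 0 then false else xor (decide (n % 2 = 1)) (thueMorse (n / 2))
decreasing_by omega

theorem thueMorse_eq_xor_div_two (n : ℕ) :
    thueMorse n = xor (decide (n % 2 = 1)) (thueMorse (n / 2)) := by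
  rw [thueMorse]
  split_ifs with h
  · simp [h, thueMorse]
  · rfl

@[simp] theorem thueMorse_zero : thueMorse 0 = false := by simp [thueMorse]

@[simp] theorem thueMorse_two_mul (n : ℕ) : thueMorse (2 * n) = thueMorse n := by
  rw [thueMorse_eq_xor_div_two]; simp

@[simp] theorem thueMorse_two_mul_add_one (n : ℕ) : thueMorse (2 * n + 1) = !thueMorse n := by
  rw [thueMorse_eq_xor_div_two]; simp [Nat.mul_add_div]

@[simp] theorem thueMorse_one : thueMorse 1 = true := by simpa using thueMorse_two_mul_add_one 0

theorem thueMorse_add_two_mul (m j : ℕ) :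
    thueMorse (m + 2 * j) = xor (decide (m % 2 = 1)) (thueMorse (m / 2 + j)) := by
  rw [thueMorse_eq_xor_div_two, Nat.add_mul_mod_self_left,
    show (m + 2 * j) / 2 = m / 2 + j by omega]

theorem odd_of_thueMorse_eq_succ {n : ℕ} (h : thueMorse n = thueMorse (n + 1)) : n % 2 = 1 := by
  obtain ⟨j, rfl | rfl⟩ := Nat.even_or_odd' n
  · simp at h
  · omega

theorem thueMorse_halve_overlap {m k : ℕ}
    (h : ∀ i ≤ 2 * k, thueMorse (m + i) = thueMorse (m + 2 * k + i)) :
    ∀ i ≤ k, thueMorse (m / 2 + i) = thueMorse (m / 2 + k + i) := by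
  intro i hi
  have h2i := h (2 * i) (by omega)
  rwa [add_assoc m, ← mul_add, thueMorse_add_two_mul, thueMorse_add_two_mul, Bool.xor_right_inj,
    ← add_assoc] at h2i

theorem thueMorse_not_overlap_of_odd {m k : ℕ} (hk : k % 2 = 1) :
    ¬ ∀ i ≤ k, thueMorse (m + i) = thueMorse (m + k + i) := by
  intro h
  by_cases hpair : ∃ j < k, thueMorse (m + j) = thueMorse (m + j + 1)
  · obtain ⟨j, hj, hmj⟩ := hpair
    have hmkj : thueMorse (m + k + j) = thueMorse (m + k + j + 1) := by
      have hsucc := h (j + 1) hj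
      rw [← add_assoc, ← add_assoc] at hsucc
      rw [← h j hj.le, hmj, hsucc]
    have := odd_of_thueMorse_eq_succ hmj
    have := odd_of_thueMorse_eq_succ hmkj
    omega
  · push Not at hpair
    have hmk := eq_xor_parity_of_alternating hpair
    have h0 := h 0 k.zero_le
    simp only [add_zero] at h0
    simp [hk, ← h0] at hmk

theorem thueMorse_infOverlapFree : InfOverlapFree thueMorse := by
  intro m k hk
  by_contra! h
  induction k using Nat.strong_induction_on generalizing m with
  | _ k ih =>
    obtain ⟨k', rfl | rfl⟩ := Nat.even_or_odd' k
    · exact ih k' (by omega) (m / 2) (by omega) (thueMorse_halve_overlap h)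
    · exact thueMorse_not_overlap_of_odd (by omega) h

def diffLetter : Bool → Bool → Fin 3
  | false, true => 0
  | true, false => 2
  | _, _ => 1

theorem diffLetter_eq_diffLetter_iff (a b c d : Bool) :
    diffLetter a b = diffLetter c d ↔ (a.toNat : ℤ) - b.toNat = c.toNat - d.toNat := by
  cases a <;> cases b <;> cases c <;> cases d <;> decide

theorem InfOverlapFree.infSqFree_diffLetter {f : ℕ → Bool} (hf : InfOverlapFree f) :
    InfSqFree fun n => diffLetter (f n) (f (n + 1)) := by
  intro m k hk
  by_contra! hsq
  set t : ℕ → ℤ := fun n => (f n).toNat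
  have hbit (n : ℕ) : t n = 0 ∨ t n = 1 := by cases f n <;> simp [t]
  have hstep (i : ℕ) (hi : i < k) :
      t (m + i) - t (m + i + 1) = t (m + k + i) - t (m + k + i + 1) :=
    (diffLetter_eq_diffLetter_iff ..).1 (hsq i hi)
  have hconst (j : ℕ) (hj : j ≤ k) : t (m + j) - t (m + k + j) = t m - t (m + k) := by
    induction j with
    | zero => simp
    | succ j ih =>
      rw [← add_assoc, ← add_assoc]
      linarith [hstep j (by omega), ih (by omega)]
  obtain ⟨j, hj, hne⟩ := hf m k hk
  have hc : t m - t (m + k) ≠ 0 := by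
    rw [← hconst j hj, sub_ne_zero]
    revert hne
    simp only [t]
    cases f (m + j) <;> cases f (m + k + j) <;> decide
  have := hconst k le_rfl
  have := hbit m
  have := hbit (m + k)
  have := hbit (m + k + k)
  omega

def thueMorseDiff (n : ℕ) : Fin 3 := diffLetter (thueMorse n) (thueMorse (n + 1))

theorem map_thueMorseDiff_range_append_tau (n : ℕ) :
    (List.range (2 * n + (thueMorse n).toNat)).map thueMorseDiff ++ tau (thueMorseDiff n) =
      (List.range (2 * (n + 1) + (thueMorse (n + 1)).toNat)).map thueMorseDiff := by
  have h2 : thueMorse (2 * n + 2) = thueMorse (n + 1) := thueMorse_two_mul (n + 1)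
  have h3 : thueMorse (2 * n + 2 + 1) = !thueMorse (n + 1) := thueMorse_two_mul_add_one (n + 1)
  cases h0 : thueMorse n <;> cases h1 : thueMorse (n + 1) <;>
    simp [List.range_succ, thueMorseDiff, diffLetter, tau, mul_add_one, h0, h1, h2, h3]

theorem flatMap_tau_map_thueMorseDiff_range (n : ℕ) :
    ((List.range n).map thueMorseDiff).flatMap tau =
      (List.range (2 * n + (thueMorse n).toNat)).map thueMorseDiff := by
  induction n with
  | zero => simp
  | succ n ih =>
    rw [← map_thueMorseDiff_range_append_tau, ← ih, List.range_succ, List.map_append,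
      List.flatMap_append]
    simp

theorem exists_iterate_flatMap_tau_eq (N : ℕ) :
    ∃ L > N, (fun l => l.flatMap tau)^[N] [0] = (List.range L).map thueMorseDiff := by
  induction N with
  | zero => exact ⟨1, one_pos, by simp [thueMorseDiff, diffLetter]⟩
  | succ N ih =>
    obtain ⟨L, hNL, hL⟩ := ih
    refine ⟨2 * L + (thueMorse L).toNat, by omega, ?_⟩
    rw [Function.iterate_succ_apply', hL, flatMap_tau_map_thueMorseDiff_range]

theorem thue_eq_thueMorseDiff (n : ℕ) : thue n = thueMorseDiff n := by
  obtain ⟨L, hnL, hL⟩ := exists_iterate_flatMap_tau_eq (n + 1)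
  rw [thue, hL, List.getD_eq_getElem _ _ (by simpa using by omega), List.getElem_map,
    List.getElem_range]

/-- The Thue word is square-free. -/
theorem thue_squarefree : InfSqFree thue := by
  rw [show thue = thueMorseDiff from funext thue_eq_thueMorseDiff]
  exact thueMorse_infOverlapFree.infSqFree_diffLetter
end

section
/- The Thue word τ^ω(0), where τ(0)=012, τ(1)=02, τ(2)=1, contains no factor equal to 010 and no factor equal to 212. -/
namespace ThueAux

def W (k : ℕ) : List (Fin 3) := (fun l => l.flatMap tau)^[k] [0]

lemma W_succ (k : ℕ) : W (k + 1) = (W k).flatMap tau := by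
  simp [W, Function.iterate_succ_apply']

lemma headA (t : List (Fin 3)) : ¬(t.flatMap tau)[0]?.getD 0 = 2 := by
  match t with
  | [] => simp
  | a :: t => fin_cases a <;> simp [tau]

lemma headB (t : List (Fin 3)) :
    (t.flatMap tau)[0]?.getD 0 = 1 → ¬(t.flatMap tau)[1]?.getD 0 = 2 := by
  match t with
  | [] => simp
  | a :: t =>
    fin_cases a <;> simp [tau]
    exact headA t

lemma main : ∀ w : List (Fin 3), ∀ m, m + 2 < (w.flatMap tau).length →
    ¬((w.flatMap tau).getD m 0 = 0 ∧ (w.flatMap tau).getD (m+1) 0 = 1 ∧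
       (w.flatMap tau).getD (m+2) 0 = 0) ∧
    ¬((w.flatMap tau).getD m 0 = 2 ∧ (w.flatMap tau).getD (m+1) 0 = 1 ∧
       (w.flatMap tau).getD (m+2) 0 = 2) := by
  intro w
  induction w with
  | nil => simp
  | cons a t ih =>
    intro m hm
    fin_cases a
    · simp only [List.flatMap_cons, tau, List.cons_append, List.nil_append] at hm ⊢
      rcases m with _ | _ | _ | m
      · simp
      · simp
      · simpa using headB t
      · simp only [List.getD_cons_succ]
        exact ih m (by simp only [List.length_cons, List.length_flatMap] at hm ⊢; omega)
    · simp only [List.flatMap_cons, tau, List.cons_append, List.nil_append] at hm ⊢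
      rcases m with _ | _ | m
      · simp
      · simpa using headB t
      · simp only [List.getD_cons_succ]
        exact ih m (by simp only [List.length_cons, List.length_flatMap] at hm ⊢; omega)
    · simp only [List.flatMap_cons, tau, List.cons_append, List.nil_append] at hm ⊢
      rcases m with _ | m
      · simp
      · simp only [List.getD_cons_succ]
        exact ih m (by simp only [List.length_cons, List.length_flatMap] at hm ⊢; omega)

lemma len_flatMap (l : List (Fin 3)) : l.length ≤ (l.flatMap tau).length := by
  induction l with
  | nil => simp
  | cons a t ih =>
    simp only [List.flatMap_cons, List.length_append, List.length_cons]
    have : 1 ≤ (tau a).length := by fin_cases a <;> simp [tau]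
    omega

lemma W_head (k : ℕ) : ∃ t, W k = 0 :: t := by
  induction k with
  | zero => exact ⟨[], rfl⟩
  | succ k ih =>
    obtain ⟨t, ht⟩ := ih
    exact ⟨1 :: 2 :: t.flatMap tau, by simp [W_succ, ht, tau]⟩

lemma W_length (k : ℕ) : 2 * k + 1 ≤ (W k).length := by
  induction k with
  | zero => simp [W]
  | succ k ih =>
    obtain ⟨t, ht⟩ := W_head k
    have h1 := len_flatMap t
    have h2 : (W (k+1)).length = 3 + (t.flatMap tau).length := by
      simp only [W_succ, ht, List.flatMap_cons, List.length_append, List.length_flatMap]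
      show (tau 0).length + _ = _
      simp [tau]
    have h3 : (W k).length = t.length + 1 := by simp [ht]
    omega

lemma W_prefix (k : ℕ) : W k <+: W (k + 1) := by
  induction k with
  | zero => exact ⟨[1, 2], rfl⟩
  | succ k ih =>
    obtain ⟨t, ht⟩ := ih
    refine ⟨t.flatMap tau, ?_⟩
    rw [W_succ, W_succ, ← List.flatMap_append, ← ht]

lemma W_prefix_le {j k : ℕ} (h : j ≤ k) : W j <+: W k := by
  induction h with
  | refl => exact List.prefix_refl _
  | step h ih => exact ih.trans (W_prefix _)

lemma thue_eq (n k : ℕ) (h : n + 1 ≤ k) : thue n = (W k).getD n 0 := by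
  have hp := W_prefix_le h
  obtain ⟨t, ht⟩ := hp
  have hn : n < (W (n + 1)).length := by have := W_length (n + 1); omega
  show (W (n + 1)).getD n 0 = (W k).getD n 0
  rw [← ht, List.getD_append _ _ _ _ hn]

end ThueAux

open ThueAux in
/-- The Thue word contains no factor `010` and no factor `212`. -/
theorem thue_avoids_010_and_212 :
    (∀ m, ¬ (thue m = 0 ∧ thue (m + 1) = 1 ∧ thue (m + 2) = 0)) ∧
    (∀ m, ¬ (thue m = 2 ∧ thue (m + 1) = 1 ∧ thue (m + 2) = 2)) := by
  have key : ∀ m,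
      ¬((W (m+3)).getD m 0 = 0 ∧ (W (m+3)).getD (m+1) 0 = 1 ∧ (W (m+3)).getD (m+2) 0 = 0) ∧
      ¬((W (m+3)).getD m 0 = 2 ∧ (W (m+3)).getD (m+1) 0 = 1 ∧ (W (m+3)).getD (m+2) 0 = 2) := by
    intro m
    have hlen : m + 2 < ((W (m+2)).flatMap tau).length := by
      have := W_length (m + 3)
      rw [W_succ] at this
      omega
    have h := main (W (m + 2)) m hlen
    rwa [← W_succ] at h
  constructor
  · intro m
    rw [thue_eq m (m+3) (by omega), thue_eq (m+1) (m+3) (by omega),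
      thue_eq (m+2) (m+3) (by omega)]
    exact (key m).1
  · intro m
    rw [thue_eq m (m+3) (by omega), thue_eq (m+1) (m+3) (by omega),
      thue_eq (m+2) (m+3) (by omega)]
    exact (key m).2
end

section
/- There exists an infinite square-free word over the alphabet {0,1,2} that contains no occurrence of the factor 010. -/
def t : ℕ → Bool
  | 0 => false
  | (n+1) => if (n+1) % 2 = 0 then t ((n+1)/2) else !t ((n+1)/2)
decreasing_by all_goals omega

lemma t_odd (n : ℕ) : t (2*n+1) = !t n := by
  rw [show 2*n+1 = (2*n)+1 from rfl, t]
  have h1 : (2*n+1) % 2 = 1 := by omega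
  have h2 : (2*n+1) / 2 = n := by omega
  simp [h1, h2]

lemma t_even (n : ℕ) : t (2*n) = t n := by
  cases n with
  | zero => rfl
  | succ k =>
    rw [show 2*(k+1) = (2*k+1)+1 by ring, t]
    have h1 : (2*k+1+1) % 2 = 0 := by omega
    have h2 : (2*k+1+1) / 2 = k+1 := by omega
    simp [h1, h2]

lemma adj_even (n : ℕ) (h : n % 2 = 0) : t (n+1) = !t n := by
  obtain ⟨m, rfl⟩ : ∃ m, n = 2*m := ⟨n/2, by omega⟩
  rw [t_odd, t_even]

lemma no_overlap : ∀ k, 0 < k → ∀ m, ¬ (∀ j ≤ k, t (m+j) = t (m+k+j)) := by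
  intro k
  induction k using Nat.strong_induction_on with
  | _ k IH =>
    intro hk m h
    rcases Nat.even_or_odd k with ⟨k', hke⟩ | ⟨k', hko⟩
    · -- k = 2k', k' ≥ 1
      have hk' : 0 < k' := by omega
      rcases Nat.even_or_odd m with ⟨m', hme⟩ | ⟨m', hmo⟩
      · refine IH k' (by omega) hk' m' (fun j hj => ?_)
        have h2 := h (2*j) (by omega)
        rw [show m + 2*j = 2*(m'+j) by omega,
            show m + k + 2*j = 2*(m'+k'+j) by omega, t_even, t_even] at h2
        exact h2
      · refine IH k' (by omega) hk' m' (fun j hj => ?_)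
        have h2 := h (2*j) (by omega)
        rw [show m + 2*j = 2*(m'+j)+1 by omega,
            show m + k + 2*j = 2*(m'+k'+j)+1 by omega, t_odd, t_odd] at h2
        simpa using h2
    · -- k = 2k'+1
      rcases Nat.lt_or_ge k' 2 with hs | hs
      · interval_cases k'
        · -- k = 1
          have h0 := h 0 (by omega)
          have h1 := h 1 (by omega)
          rcases Nat.even_or_odd m with ⟨m', hme⟩ | ⟨m', hmo⟩
          · have := adj_even m (by omega)
            simp only [show m + 0 = m by omega, show m + k + 0 = m + 1 by omega] at h0
            rw [h0] at this
            simp at this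
          · have := adj_even (m+1) (by omega)
            simp only [show m + 1 = m+1 by omega, show m + k + 1 = m + 2 by omega] at h1
            rw [h1] at this
            simp at this
        · -- k = 3
          have h0 := h 0 (by omega)
          have h1 := h 1 (by omega)
          have h2 := h 2 (by omega)
          have h3 := h 3 (by omega)
          simp only [show m + 0 = m by omega, show m + k + 0 = m + 3 by omega,
            show m + k + 1 = m + 4 by omega, show m + k + 2 = m + 5 by omega,
            show m + k + 3 = m + 6 by omega] at h0 h1 h2 h3
          rcases Nat.even_or_odd m with ⟨m', hme⟩ | ⟨m', hmo⟩
          · have e0 := adj_even m (by omega)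
            have e2 := adj_even (m+2) (by omega)
            have e4 := adj_even (m+4) (by omega)
            rw [show m+2+1 = m+3 by omega] at e2
            rw [show m+4+1 = m+5 by omega] at e4
            rw [← h0] at e2
            rw [← h1, e0] at e4
            rw [← h2] at e4
            rw [e2] at e4
            simp at e4
          · have e1 := adj_even (m+1) (by omega)
            have e3 := adj_even (m+3) (by omega)
            have e5 := adj_even (m+5) (by omega)
            rw [show m+1+1 = m+2 by omega] at e1
            rw [show m+3+1 = m+4 by omega, ← h1, ← h0] at e3
            rw [show m+5+1 = m+6 by omega, ← h3, ← h0, ← h2, e1, e3] at e5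
            simp at e5
      · -- k = 2k'+1 ≥ 5
        -- pick even i ∈ {m, m+1}
        have key : ∀ i, i % 2 = 0 → m ≤ i → i ≤ m + 1 → False := by
          intro i hi him hiM
          -- i even, positions i..i+3 are within [m, m+k]
          obtain ⟨n, hn⟩ : ∃ n, i + k = 2*n+1 := ⟨(i+k)/2, by omega⟩
          have e0 := adj_even i hi
          have e2 := adj_even (i+2) (by omega)
          have g0 := h (i - m) (by omega)
          have g1 := h (i + 1 - m) (by omega)
          have g2 := h (i + 2 - m) (by omega)
          have g3 := h (i + 3 - m) (by omega)
          rw [show m + (i-m) = i by omega, show m + k + (i-m) = 2*n+1 by omega, t_odd] at g0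
          rw [show m + (i+1-m) = i+1 by omega, show m + k + (i+1-m) = 2*(n+1) by omega, t_even] at g1
          rw [show m + (i+2-m) = i+2 by omega, show m + k + (i+2-m) = 2*(n+1)+1 by omega, t_odd] at g2
          rw [show m + (i+3-m) = i+3 by omega, show m + k + (i+3-m) = 2*(n+2) by omega, t_even] at g3
          -- from e0,g0,g1 : t n = t (n+1); from e2,g2,g3 : t (n+1) = t (n+2)
          have f1 : t n = t (n+1) := by
            rw [e0, g0] at g1
            simpa using g1
          have f2 : t (n+1) = t (n+2) := by
            rw [show i+2+1 = i+3 by omega] at e2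
            rw [e2, g2] at g3
            simpa using g3
          rcases Nat.even_or_odd n with ⟨n', hne⟩ | ⟨n', hno⟩
          · have := adj_even n (by omega)
            rw [← f1] at this; simp at this
          · have := adj_even (n+1) (by omega)
            rw [show n+1+1 = n+2 by omega, ← f2] at this; simp at this
        rcases Nat.even_or_odd m with ⟨m', hme⟩ | ⟨m', hmo⟩
        · exact key m (by omega) le_rfl (by omega)
        · exact key (m+1) (by omega) (by omega) le_rfl

def w3 (n : ℕ) : Fin 3 := if t n = t (n+1) then 1 else if t n then 0 else 2

def tz (n : ℕ) : ℤ := if t n then 1 else 0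

lemma tz_eq_iff (a b : ℕ) : tz a = tz b ↔ t a = t b := by
  unfold tz
  rcases ha : t a <;> rcases hb : t b <;> simp

lemma w3_diff (a b : ℕ) (h : w3 a = w3 b) :
    tz (a+1) - tz a = tz (b+1) - tz b := by
  unfold w3 at h
  unfold tz
  rcases h0 : t a <;> rcases h1 : t (a+1) <;> rcases h2 : t b <;> rcases h3 : t (b+1) <;>
    simp [h0, h1, h2, h3] at h ⊢

/-- There is an infinite square-free ternary word avoiding the factor `010`. -/
theorem exists_infinite_squarefree_avoiding_010 :
    ∃ w : ℕ → Fin 3, InfSqFree w ∧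
      ∀ m, ¬ (w m = 0 ∧ w (m + 1) = 1 ∧ w (m + 2) = 0) := by
  refine ⟨w3, ?_, ?_⟩
  · intro m k hk
    by_contra hcon
    push_neg at hcon
    have key : ∀ j, j ≤ k → tz (m+k+j) - tz (m+j) = tz (m+k) - tz m := by
      intro j hj
      induction j with
      | zero => simp
      | succ j ih =>
        have h1 := w3_diff (m+j) (m+k+j) (hcon j (by omega))
        have h2 := ih (by omega)
        have e1 : m + (j+1) = m + j + 1 := by omega
        have e2 : m + k + (j+1) = m + k + j + 1 := by omega
        rw [e1, e2]
        linarith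
    by_cases hc : t m = t (m+k)
    · refine no_overlap k hk m (fun j hj => ?_)
      rw [← tz_eq_iff]
      have := key j hj
      have hc' : tz m = tz (m+k) := (tz_eq_iff m (m+k)).2 hc
      linarith
    · have h1 := key k le_rfl
      have hb : ∀ n, tz n = 0 ∨ tz n = 1 := by
        intro n; unfold tz; split <;> simp
      have hc' : tz m ≠ tz (m+k) := fun he => hc ((tz_eq_iff m (m+k)).1 he)
      rcases hb m with h2 | h2 <;> rcases hb (m+k) with h3 | h3 <;>
        rcases hb (m+k+k) with h4 | h4 <;> omega
  · rintro m ⟨h0, h1, h2⟩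
    unfold w3 at h0 h1 h2
    rw [show m+1+1 = m+2 by omega] at h1
    rcases g0 : t m <;> rcases g1 : t (m+1) <;> rcases g2 : t (m+2) <;> rcases g3 : t (m+2+1) <;>
      simp [g0, g1, g2, g3] at h0 h1 h2
end

section
/- Let G be a graph in which some vertex v has at least three distinct neighbours. Then there exists an infinite square-free G-word (an infinite square-free walk on G) using at most 4 vertices. Concretely, if vertex 3 has neighbours 0,1,2 and w is an infinite square-free word over {0,1,2}, then the word obtained from w by replacing each letter i with the two-letter block i3 is an infinite square-free G-word. -/
def tm (n : ℕ) : Bool :=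
  if n = 0 then false
  else if n % 2 = 0 then tm (n / 2) else !tm (n / 2)
termination_by n
decreasing_by all_goals omega

lemma tm_even (n : ℕ) : tm (2 * n) = tm n := by
  rcases Nat.eq_zero_or_pos n with h | h
  · subst h; rfl
  · rw [tm, if_neg (by omega), if_pos (by omega)]
    congr 1; omega

lemma tm_odd (n : ℕ) : tm (2 * n + 1) = !tm n := by
  rw [tm, if_neg (by omega), if_neg (by omega)]
  have : (2 * n + 1) / 2 = n := by omega
  rw [this]

lemma tm_pair (s : ℕ) : tm (2 * s + 1) = !tm (2 * s) := by
  rw [tm_odd, tm_even]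

/-- Thue–Morse is overlap-free. -/
theorem tm_no_overlap : ∀ k, 0 < k → ∀ m, ¬ (∀ i ≤ k, tm (m + i) = tm (m + k + i)) := by
  intro k
  induction k using Nat.strong_induction_on with
  | _ k IH =>
  intro hk m H
  rcases Nat.even_or_odd k with ⟨j, hj⟩ | ⟨j, hj⟩
  · -- k even, k = 2*j (hj : k = j + j)
    have hj0 : 0 < j := by omega
    rcases Nat.even_or_odd m with ⟨s, hs⟩ | ⟨s, hs⟩
    · -- m even
      refine IH j (by omega) hj0 s ?_
      intro i hi
      have e1 : s + i = (m + 2 * i) / 2 ∧ 2 * ((s + i)) = m + 2 * i := by omega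
      have h1 : tm (s + i) = tm (m + 2 * i) := by
        rw [← e1.2, tm_even]
      have h2 : tm (s + j + i) = tm (m + k + 2 * i) := by
        have : m + k + 2 * i = 2 * (s + j + i) := by omega
        rw [this, tm_even]
      rw [h1, h2]
      exact H (2 * i) (by omega)
    · -- m odd
      refine IH j (by omega) hj0 s ?_
      intro i hi
      have h1 : tm (m + 2 * i) = !tm (s + i) := by
        have : m + 2 * i = 2 * (s + i) + 1 := by omega
        rw [this, tm_odd]
      have h2 : tm (m + k + 2 * i) = !tm (s + j + i) := by
        have : m + k + 2 * i = 2 * (s + j + i) + 1 := by omega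
        rw [this, tm_odd]
      have := H (2 * i) (by omega)
      rw [h1, h2] at this
      simpa using this
  · -- k odd, k = 2*j+1
    rcases Nat.lt_or_ge k 3 with hk3 | hk3
    · -- k = 1
      have hk1 : k = 1 := by omega
      subst hk1
      have h0 := H 0 (by omega)
      have h1 := H 1 (by omega)
      simp only [Nat.add_zero] at h0
      rcases Nat.even_or_odd m with ⟨s, hs⟩ | ⟨s, hs⟩
      · rw [show m = 2 * s by omega] at h0
        rw [tm_pair] at h0; simp at h0
      · rw [show m + 1 = 2 * (s + 1) by omega] at h1
        rw [tm_pair] at h1; simp at h1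
    · -- k ≥ 3 odd: alternation on [m, m+2k]
      have alt : ∀ p, m ≤ p → p < m + 2 * k → tm (p + 1) = !tm p := by
        intro p hp1 hp2
        rcases Nat.even_or_odd p with ⟨s, hs⟩ | ⟨s, hs⟩
        · have hp : p = 2 * s := by omega
          rw [hp, tm_pair]
        · -- p odd
          rcases Nat.lt_or_ge p (m + k) with hlt | hge
          · -- p odd, p < m + k : p + k even
            have hpk : p + k = 2 * (s + j + 1) := by omega
            have e1 : tm p = tm (p + k) := by
              have := H (p - m) (by omega)
              have e : m + (p - m) = p := by omega
              have e' : m + k + (p - m) = p + k := by omega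
              rwa [e, e'] at this
            have e2 : tm (p + 1) = tm (p + k + 1) := by
              have := H (p + 1 - m) (by omega)
              have e : m + (p + 1 - m) = p + 1 := by omega
              have e' : m + k + (p + 1 - m) = p + k + 1 := by omega
              rwa [e, e'] at this
            have e3 : tm (p + k + 1) = !tm (p + k) := by
              rw [hpk]; exact tm_pair _
            rw [e2, e3, ← e1]
          · -- p odd, p ≥ m + k : p - k even
            have hpk : p - k = 2 * (s - j) := by omega
            have e1 : tm (p - k) = tm p := by
              have := H (p - k - m) (by omega)
              have e : m + (p - k - m) = p - k := by omega
              have e' : m + k + (p - k - m) = p := by omega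
              rwa [e, e'] at this
            have e2 : tm (p - k + 1) = tm (p + 1) := by
              have := H (p - k - m + 1) (by omega)
              have e : m + (p - k - m + 1) = p - k + 1 := by omega
              have e' : m + k + (p - k - m + 1) = p + 1 := by omega
              rwa [e, e'] at this
            have e3 : tm (p - k + 1) = !tm (p - k) := by
              rw [hpk]; exact tm_pair _
            rw [← e2, e3, e1]
      refine IH 2 (by omega) (by omega) m ?_
      intro i hi
      have a1 : tm (m + i + 1) = !tm (m + i) := alt (m + i) (by omega) (by omega)
      have a2 : tm (m + i + 2) = !tm (m + i + 1) := by
        have := alt (m + i + 1) (by omega) (by omega)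
        simpa [Nat.add_assoc] using this
      have : m + 2 + i = m + i + 2 := by omega
      rw [this, a2, a1, Bool.not_not]

/-- The square-free ternary word: first difference of Thue–Morse. -/
def tern (n : ℕ) : Fin 3 :=
  if tm n = tm (n + 1) then 1 else if tm n then 0 else 2

lemma tern_step {p q : ℕ} (h : tern p = tern q) :
    (tm p = tm q) ↔ (tm (p + 1) = tm (q + 1)) := by
  unfold tern at h
  rcases Bool.eq_false_or_eq_true (tm p) with h1 | h1 <;>
  rcases Bool.eq_false_or_eq_true (tm (p+1)) with h2 | h2 <;>
  rcases Bool.eq_false_or_eq_true (tm q) with h3 | h3 <;>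
  rcases Bool.eq_false_or_eq_true (tm (q+1)) with h4 | h4 <;>
  simp_all

lemma tern_flat {p q : ℕ} (h : tern p = tern q) (h1 : tm p ≠ tm q)
    (h2 : tm (p + 1) ≠ tm (q + 1)) : tm p = tm (p + 1) := by
  unfold tern at h
  rcases Bool.eq_false_or_eq_true (tm p) with e1 | e1 <;>
  rcases Bool.eq_false_or_eq_true (tm (p+1)) with e2 | e2 <;>
  rcases Bool.eq_false_or_eq_true (tm q) with e3 | e3 <;>
  rcases Bool.eq_false_or_eq_true (tm (q+1)) with e4 | e4 <;>
  simp_all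

theorem tern_sqfree : InfSqFree tern := by
  intro m k hk
  by_contra hcon
  push_neg at hcon
  -- hcon : ∀ i < k, tern (m + i) = tern (m + k + i)
  by_cases hb : tm m = tm (m + k)
  · have key : ∀ i ≤ k, tm (m + i) = tm (m + k + i) := by
      intro i hi
      induction i with
      | zero => simpa using hb
      | succ n ihn =>
        have hn := ihn (by omega)
        have ht := hcon n (by omega)
        have := (tern_step ht).mp hn
        have e1 : m + (n + 1) = m + n + 1 := by omega
        have e2 : m + k + (n + 1) = m + k + n + 1 := by omega
        rw [e1, e2]; exact this
    exact tm_no_overlap k hk m key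
  · have key : ∀ i ≤ k, tm (m + i) ≠ tm (m + k + i) := by
      intro i hi
      induction i with
      | zero => simpa using hb
      | succ n ihn =>
        have hn := ihn (by omega)
        have ht := hcon n (by omega)
        have : tm (m + n + 1) ≠ tm (m + k + n + 1) := fun hc =>
          hn ((tern_step ht).mpr hc)
        have e1 : m + (n + 1) = m + n + 1 := by omega
        have e2 : m + k + (n + 1) = m + k + n + 1 := by omega
        rw [e1, e2]; exact this
    -- tm is constant on [m, m+k]
    have flat : ∀ i < k, tm (m + i) = tm (m + i + 1) :=
      fun i hi => tern_flat (hcon i hi)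
        (by simpa using key i (by omega))
        (by
          have := key (i + 1) (by omega)
          have e1 : m + (i + 1) = m + i + 1 := by omega
          have e2 : m + k + (i + 1) = m + k + i + 1 := by omega
          rw [e1, e2] at this; exact this)
    have const : ∀ i ≤ k, tm (m + i) = tm m := by
      intro i hi
      induction i with
      | zero => rfl
      | succ n ihn =>
        have := flat n (by omega)
        have e1 : m + (n + 1) = m + n + 1 := by omega
        rw [e1, ← this]; exact ihn (by omega)
    exact key 0 (by omega) (by
      have := const k le_rfl
      simpa using this.symm)

/-- If a graph `G` has a vertex `v` with three distinct neighbours `a, b, c`,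
then `G` admits an infinite square-free walk using at most 4 vertices.
Concretely, interleaving any infinite square-free ternary word (with letters
renamed to `a, b, c`) with the centre `v` yields such a walk. -/
theorem exists_infinite_squarefree_walk_of_degree_three {V : Type*}
    (G : SimpleGraph V) (v a b c : V) (hab : a ≠ b) (hac : a ≠ c) (hbc : b ≠ c)
    (ha : G.Adj v a) (hb : G.Adj v b) (hc : G.Adj v c) :
    (∃ w : ℕ → V, (∀ n, G.Adj (w n) (w (n + 1))) ∧ InfSqFree w ∧
        ∀ n, w n ∈ ({v, a, b, c} : Set V)) ∧
    (∀ u : ℕ → Fin 3, InfSqFree u →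
      (∀ n, G.Adj ((fun n => if n % 2 = 0 then ![a, b, c] (u (n / 2)) else v) n)
              ((fun n => if n % 2 = 0 then ![a, b, c] (u (n / 2)) else v) (n + 1))) ∧
      InfSqFree (fun n => if n % 2 = 0 then ![a, b, c] (u (n / 2)) else v)) := by
  have hadj : ∀ i : Fin 3, G.Adj v (![a, b, c] i) := by
    intro i; fin_cases i <;> simpa
  have hfv : ∀ i : Fin 3, ![a, b, c] i ≠ v := by
    intro i; fin_cases i <;> simp [ha.ne', hb.ne', hc.ne']
  have hfinj : ∀ i j : Fin 3, ![a, b, c] i = ![a, b, c] j → i = j := by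
    intro i j h; fin_cases i <;> fin_cases j <;> simp_all
  have key : ∀ u : ℕ → Fin 3, InfSqFree u →
      (∀ n, G.Adj ((fun n => if n % 2 = 0 then ![a, b, c] (u (n / 2)) else v) n)
              ((fun n => if n % 2 = 0 then ![a, b, c] (u (n / 2)) else v) (n + 1))) ∧
      InfSqFree (fun n => if n % 2 = 0 then ![a, b, c] (u (n / 2)) else v) := by
    intro u hu
    constructor
    · intro n
      by_cases hn : n % 2 = 0
      · simp only [if_pos hn, if_neg (show ¬ (n + 1) % 2 = 0 by omega)]
        exact (hadj _).symm
      · simp only [if_neg hn, if_pos (show (n + 1) % 2 = 0 by omega)]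
        exact hadj _
    · intro m k hk
      rcases Nat.even_or_odd k with ⟨j, hj⟩ | ⟨j, hj⟩
      · -- k even
        have hj0 : 0 < j := by omega
        rcases Nat.even_or_odd m with ⟨s, hs⟩ | ⟨s, hs⟩
        · -- m even
          obtain ⟨i, hi, hne⟩ := hu s j hj0
          refine ⟨2 * i, by omega, ?_⟩
          simp only [if_pos (show (m + 2 * i) % 2 = 0 by omega),
            if_pos (show (m + k + 2 * i) % 2 = 0 by omega)]
          rw [show (m + 2 * i) / 2 = s + i by omega,
            show (m + k + 2 * i) / 2 = s + j + i by omega]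
          exact fun h => hne (hfinj _ _ h)
        · -- m odd
          obtain ⟨i, hi, hne⟩ := hu (s + 1) j hj0
          refine ⟨2 * i + 1, by omega, ?_⟩
          simp only [show m + (2 * i + 1) = m + 2 * i + 1 by omega,
            show m + k + (2 * i + 1) = m + k + 2 * i + 1 by omega,
            if_pos (show (m + 2 * i + 1) % 2 = 0 by omega),
            if_pos (show (m + k + 2 * i + 1) % 2 = 0 by omega)]
          rw [show (m + 2 * i + 1) / 2 = s + 1 + i by omega,
            show (m + k + 2 * i + 1) / 2 = s + 1 + j + i by omega]
          exact fun h => hne (hfinj _ _ h)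
      · -- k odd : positions m and m + k have different parity
        refine ⟨0, hk, ?_⟩
        simp only [Nat.add_zero]
        by_cases hm : m % 2 = 0
        · simp only [if_pos hm, if_neg (show ¬ (m + k) % 2 = 0 by omega)]
          exact hfv _
        · simp only [if_neg hm, if_pos (show (m + k) % 2 = 0 by omega)]
          exact fun h => hfv _ h.symm
  refine ⟨?_, key⟩
  obtain ⟨hadj', hsq⟩ := key tern tern_sqfree
  refine ⟨_, hadj', hsq, ?_⟩
  intro n
  by_cases hn : n % 2 = 0
  · simp only [if_pos hn]
    have : ∀ i : Fin 3, ![a, b, c] i ∈ ({v, a, b, c} : Set V) := by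
      intro i; fin_cases i <;> simp
    exact this _
  · simp only [if_neg hn]
    left; rfl
end

section
/- If w is an infinite square-free word over {0,1,2}, then the infinite word obtained by replacing each letter i of w by the two-letter block i3 (over alphabet {0,1,2,3}) is square-free. -/
lemma castSucc_ne_three (x : Fin 3) : Fin.castSucc x ≠ (3 : Fin 4) := by
  fin_cases x <;> decide

/-- Replacing each letter `i` of an infinite square-free ternary word by the
two-letter block `i3` yields a square-free infinite word over `{0,1,2,3}`. -/
theorem interleave_three_squarefree (w : ℕ → Fin 3) (hw : InfSqFree w) :
    InfSqFree (fun n => if n % 2 = 0 then Fin.castSucc (w (n / 2)) else (3 : Fin 4)) := by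
  intro m k hk
  rcases Nat.even_or_odd k with ⟨l, hl⟩ | ⟨l, hl⟩
  · -- k even
    have hl0 : 0 < l := by omega
    by_contra h
    push_neg at h
    rcases Nat.even_or_odd m with ⟨a, ha⟩ | ⟨a, ha⟩
    · obtain ⟨j, hj, hne⟩ := hw a l hl0
      have hc := h (2*j) (by omega)
      have e1 : (m + 2*j) % 2 = 0 := by omega
      have e2 : (m + 2*j) / 2 = a + j := by omega
      have e3 : (m + k + 2*j) % 2 = 0 := by omega
      have e4 : (m + k + 2*j) / 2 = a + l + j := by omega
      simp only [e1, e2, e3, e4, if_pos rfl] at hc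
      exact hne (Fin.castSucc_inj.mp hc)
    · obtain ⟨j, hj, hne⟩ := hw (a+1) l hl0
      have hc := h (2*j+1) (by omega)
      have e1 : (m + (2*j+1)) % 2 = 0 := by omega
      have e2 : (m + (2*j+1)) / 2 = a + 1 + j := by omega
      have e3 : (m + k + (2*j+1)) % 2 = 0 := by omega
      have e4 : (m + k + (2*j+1)) / 2 = a + 1 + l + j := by omega
      simp only [e1, e2, e3, e4, if_pos rfl] at hc
      exact hne (Fin.castSucc_inj.mp hc)
  · -- k odd
    refine ⟨0, hk, ?_⟩
    simp only [Nat.add_zero]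
    rcases Nat.even_or_odd m with ⟨b, hb⟩ | ⟨b, hb⟩
    · have e1 : m % 2 = 0 := by omega
      have e2 : (m + k) % 2 = 1 := by omega
      simp only [e1, e2, if_pos rfl]
      simp
      exact castSucc_ne_three _
    · have e1 : m % 2 = 1 := by omega
      have e2 : (m + k) % 2 = 0 := by omega
      simp only [e1, e2]
      simp
      exact fun h => castSucc_ne_three _ h.symm
end

section
/- There is no 3-colouring φ : {0,1,2,3} → {0,1,2} and infinite K_{1,3}-word u such that φ(u) is square-free. That is, the colour number of the claw K_{1,3} is greater than 3. -/
/-- Adjacency in the claw `K_{1,3}` on `{0,1,2,3}` with centre `0` and edges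
`01`, `02`, `03`. -/
def ClawAdj (a b : Fin 4) : Prop := (a = 0 ∧ b ≠ 0) ∨ (b = 0 ∧ a ≠ 0)

lemma fin3_aux : ∀ (c a b e d : Fin 3), a ≠ c → b ≠ c → e ≠ c → d ≠ c →
    a ≠ b → b ≠ e → e ≠ d → (a ≠ e ∨ b ≠ d) → False := by decide

/-- No 3-colouring of the claw `K_{1,3}` admits an infinite walk whose colour
sequence is square-free: the colour number of `K_{1,3}` exceeds 3. -/
theorem no_three_coloured_squarefree_claw_walk :
    ¬ ∃ (φ : Fin 4 → Fin 3) (u : ℕ → Fin 4),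
        (∀ n, ClawAdj (u n) (u (n + 1))) ∧ InfSqFree (fun n => φ (u n)) := by
  rintro ⟨φ, u, hadj, hsf⟩
  set w : ℕ → Fin 3 := fun n => φ (u n) with hwdef
  -- every second position of `u` is the centre `0`
  have step : ∀ n, u n = 0 → u (n + 2) = 0 := by
    intro n h
    have h1 := hadj n
    have h2 := hadj (n + 1)
    have hb : u (n + 1) ≠ 0 := by
      rcases h1 with ⟨_, hb⟩ | ⟨_, ha⟩
      · exact hb
      · exact absurd h ha
    rcases h2 with ⟨ha, _⟩ | ⟨hb2, _⟩
    · exact absurd ha hb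
    · exact hb2
  have key : ∃ r, ∀ n, u (2 * n + r) = 0 := by
    by_cases h0 : u 0 = 0
    · refine ⟨0, fun n => ?_⟩
      induction n with
      | zero => simpa using h0
      | succ k ih =>
          have := step _ ih
          have e : 2 * k + 0 + 2 = 2 * (k + 1) + 0 := by ring
          rwa [e] at this
    · refine ⟨1, fun n => ?_⟩
      have h1 : u 1 = 0 := by
        rcases hadj 0 with ⟨ha, _⟩ | ⟨hb, _⟩
        · exact absurd ha h0
        · exact hb
      induction n with
      | zero => simpa using h1
      | succ k ih =>
          have := step _ ih
          have e : 2 * k + 1 + 2 = 2 * (k + 1) + 1 := by ring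
          rwa [e] at this
  obtain ⟨r, hz⟩ := key
  set c : Fin 3 := φ 0 with hc
  have hwc : ∀ n, w (2 * n + r) = c := by
    intro n
    simp only [hwdef, hz n, hc]
  -- odd-parity letters differ from c (squares of length 1)
  have hodd : ∀ n, w (2 * n + r + 1) ≠ c := by
    intro n h
    obtain ⟨i, hi, hne⟩ := hsf (2 * n + r) 1 one_pos
    have : i = 0 := by omega
    subst this
    apply hne
    show w (2 * n + r + 0) = w (2 * n + r + 1 + 0)
    rw [show 2 * n + r + 0 = 2 * n + r from by ring,
        show 2 * n + r + 1 + 0 = 2 * n + r + 1 from by ring, hwc n, h]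
  -- consecutive odd-parity letters differ (squares of length 2)
  have hstep2 : ∀ n, w (2 * n + r + 1) ≠ w (2 * (n + 1) + r + 1) := by
    intro n h
    obtain ⟨i, hi, hne⟩ := hsf (2 * n + r + 1) 2 (by norm_num)
    interval_cases i
    · apply hne
      show w (2 * n + r + 1 + 0) = w (2 * n + r + 1 + 2 + 0)
      rw [show 2 * n + r + 1 + 0 = 2 * n + r + 1 from by ring,
          show 2 * n + r + 1 + 2 + 0 = 2 * (n + 1) + r + 1 from by ring, h]
    · apply hne
      show w (2 * n + r + 1 + 1) = w (2 * n + r + 1 + 2 + 1)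
      rw [show 2 * n + r + 1 + 1 = 2 * (n + 1) + r from by ring,
          show 2 * n + r + 1 + 2 + 1 = 2 * (n + 2) + r from by ring,
          hwc, hwc]
  -- no square of length 4 starting at the first odd-parity position
  have h4 : w (2 * 0 + r + 1) ≠ w (2 * 2 + r + 1) ∨
      w (2 * 1 + r + 1) ≠ w (2 * 3 + r + 1) := by
    obtain ⟨i, hi, hne⟩ := hsf (r + 1) 4 (by norm_num)
    interval_cases i
    · left
      exact fun h => hne ((congrArg w (show r + 1 + 0 = 2 * 0 + r + 1 by omega)).trans
        (h.trans (congrArg w (show 2 * 2 + r + 1 = r + 1 + 4 + 0 by omega))))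
    · exfalso
      exact hne (((congrArg w (show r + 1 + 1 = 2 * 1 + r by omega)).trans (hwc 1)).trans
        ((hwc 3).symm.trans (congrArg w (show 2 * 3 + r = r + 1 + 4 + 1 by omega))))
    · right
      exact fun h => hne ((congrArg w (show r + 1 + 2 = 2 * 1 + r + 1 by omega)).trans
        (h.trans (congrArg w (show 2 * 3 + r + 1 = r + 1 + 4 + 2 by omega))))
    · exfalso
      exact hne (((congrArg w (show r + 1 + 3 = 2 * 2 + r by omega)).trans (hwc 2)).trans
        ((hwc 4).symm.trans (congrArg w (show 2 * 4 + r = r + 1 + 4 + 3 by omega))))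
  exact fin3_aux c (w (2 * 0 + r + 1)) (w (2 * 1 + r + 1)) (w (2 * 2 + r + 1))
    (w (2 * 3 + r + 1)) (hodd 0) (hodd 1) (hodd 2) (hodd 3)
    (hstep2 0) (hstep2 1) (hstep2 2) h4
end

section
/- Let w be a square-free C_3-word over {0,1,2} (in fact every square-free word over {0,1,2} is a C_3-word, since any two distinct letters are adjacent in C_3). Form w' over {0,1,2,3} by inserting the letter 3 between every adjacent pair (0,2) and (2,0) in w. Then w' is a square-free C_4-word, where C_4 has edges {0,1},{1,2},{2,3},{3,0}. -/
/-- Adjacency in the cycle `C₄` on `{0,1,2,3}` with edges `01`, `12`, `23`, `30`. -/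
def C4Adj (a b : Fin 4) : Prop := (a.val + 1) % 4 = b.val ∨ (b.val + 1) % 4 = a.val

/-- Insert the letter `3` between every adjacent pair `(0,2)` and `(2,0)`. -/
def ins : List (Fin 3) → List (Fin 4)
  | [] => []
  | [a] => [Fin.castSucc a]
  | a :: b :: t =>
    if (a = 0 ∧ b = 2) ∨ (a = 2 ∧ b = 0) then
      Fin.castSucc a :: 3 :: ins (b :: t)
    else
      Fin.castSucc a :: ins (b :: t)

theorem SqFree.isChain_ne {α : Type*} {w : List α} (hw : SqFree w) : w.IsChain (· ≠ ·) :=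
  List.isChain_iff_forall_rel_of_append_cons_cons.mpr fun a _ l₁ l₂ hw' hab =>
    hw [a] (List.cons_ne_nil a []) ⟨l₁, l₂, by simp [hw', hab]⟩

theorem SqFree.filterMap_eq_nil_of_append_self_infix {α β : Type*} {f : β → Option α}
    {u v : List β} (hv : SqFree (v.filterMap f)) (h : u ++ u <:+: v) : u.filterMap f = [] := by
  by_contra hu
  exact hv _ hu (by simpa only [List.filterMap_append] using h.filterMap f)

theorem List.IsChain.length_le_one_of_forall_eq {α : Type*} {R : α → α → Prop} {a : α} :
    ∀ {l : List α}, l.IsChain R → ¬ R a a → (∀ x ∈ l, x = a) → l.length ≤ 1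
  | [], _, _, _ | [_], _, _, _ => by simp
  | x :: y :: _, hl, ha, hx => by
    obtain rfl := hx x (by simp)
    obtain rfl := hx y (by simp)
    exact absurd (List.isChain_cons_cons.mp hl).1 ha

instance : DecidableRel C4Adj := fun a b => by unfold C4Adj; infer_instance

def eraseLastLetter {n : ℕ} : List (Fin (n + 1)) → List (Fin n) :=
  List.filterMap (Fin.lastCases none some)

theorem eraseLastLetter_eq_nil_iff {n : ℕ} {l : List (Fin (n + 1))} :
    eraseLastLetter l = [] ↔ ∀ x ∈ l, x = Fin.last n := by
  refine List.filterMap_eq_nil_iff.trans (forall₂_congr fun x _ => ?_)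
  cases x using Fin.lastCases <;> simp [Fin.castSucc_ne_last]

@[simp]
theorem eraseLastLetter_cons_castSucc {n : ℕ} (a : Fin n) (l : List (Fin (n + 1))) :
    eraseLastLetter (a.castSucc :: l) = a :: eraseLastLetter l := by
  simp [eraseLastLetter]

@[simp]
theorem eraseLastLetter_cons_last {n : ℕ} (l : List (Fin (n + 1))) :
    eraseLastLetter (Fin.last n :: l) = eraseLastLetter l := by
  simp [eraseLastLetter]

theorem eraseLastLetter_ins : ∀ w : List (Fin 3), eraseLastLetter (ins w) = w
  | [] => rfl
  | [_] => by simp [ins, eraseLastLetter]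
  | a :: b :: t => by
    rw [ins]
    split_ifs <;> rw [eraseLastLetter_cons_castSucc]
    · exact congrArg (a :: ·) ((eraseLastLetter_cons_last _).trans (eraseLastLetter_ins _))
    · exact congrArg (a :: ·) (eraseLastLetter_ins _)

theorem exists_ins_cons (a : Fin 3) (t : List (Fin 3)) :
    ∃ l, ins (a :: t) = a.castSucc :: l := by
  cases t with
  | nil => exact ⟨[], rfl⟩
  | cons b t => rw [ins]; split_ifs <;> exact ⟨_, rfl⟩

theorem c4Adj_castSucc {a b : Fin 3} (hab : a ≠ b) (h : ¬((a = 0 ∧ b = 2) ∨ (a = 2 ∧ b = 0))) :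
    C4Adj a.castSucc b.castSucc := by
  revert a b; decide

theorem c4Adj_three {a b : Fin 3} (h : (a = 0 ∧ b = 2) ∨ (a = 2 ∧ b = 0)) :
    C4Adj a.castSucc 3 ∧ C4Adj 3 b.castSucc := by
  revert a b; decide

theorem isChain_ins : ∀ {w : List (Fin 3)}, w.IsChain (· ≠ ·) → (ins w).IsChain C4Adj
  | [], _ | [_], _ => by simp [ins]
  | a :: b :: t, hw => by
    obtain ⟨hab, ht⟩ := List.isChain_cons_cons.mp hw
    have ih := isChain_ins ht
    obtain ⟨l, hl⟩ := exists_ins_cons b t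
    rw [hl] at ih
    rw [ins, hl]
    split_ifs with h
    · exact .cons_cons (c4Adj_three h).1 (.cons_cons (c4Adj_three h).2 ih)
    · exact .cons_cons (c4Adj_castSucc hab h) ih

/-- If `w` is a square-free word over `{0,1,2}` (hence a `C₃`-word), then the
word obtained by inserting `3` between each adjacent `0,2` or `2,0` is a
square-free `C₄`-word. -/
theorem ins_squarefree_C4_word (w : List (Fin 3)) (hw : SqFree w) :
    (ins w).Chain' C4Adj ∧ SqFree (ins w) := by
  have hchain : (ins w).IsChain C4Adj := isChain_ins hw.isChain_ne
  refine ⟨hchain, fun u hu hinf => ?_⟩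
  have herase : eraseLastLetter u = [] :=
    SqFree.filterMap_eq_nil_of_append_self_infix
      (by rwa [← eraseLastLetter, eraseLastLetter_ins]) hinf
  have hthree : ∀ x ∈ u ++ u, x = Fin.last 3 := by
    simpa only [List.mem_append, or_self] using eraseLastLetter_eq_nil_iff.mp herase
  have hlen := (hchain.infix hinf).length_le_one_of_forall_eq (by decide) hthree
  have hu_pos := List.length_pos_iff.mpr hu
  rw [List.length_append] at hlen
  omega
end

section
/- There is no 3-colouring φ : {0,1,2,3} → {0,1,2} and infinite C_4-word u such that φ(u) is square-free; hence γ(C_4) = 4 (four colours are necessary, and the identity colouring with 4 colours suffices). -/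
/-!
Since `C₄ = K_{2,2}`, a walk alternates between the parts `{0, 2}` and `{1, 3}` and chooses freely
inside each part. Under a colouring `φ` its colour word is therefore just a word whose letters lie
alternately in `φ {0, 2}` and `φ {1, 3}`; for each of the 81 colourings with three colours an
exhaustive search shows that no such word of length 16 is square-free.

Conversely, with four colours let the walk pick its part by the parity of `n` and its vertex
inside the part by the parity of the number of digits `2` in the ternary expansion of `n`.
A square in this walk has even half-length and is also a square in the digit parity sequence,
which is the fixed point of `0 ↦ 001`, `1 ↦ 110`; it has no square of even half-length,
by descent on the half-length through blocks of three letters.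
-/

section Search

variable {α : Type*}

def revPrefix (w : ℕ → α) : ℕ → List α
  | 0 => []
  | n + 1 => w n :: revPrefix w n

@[simp]
theorem length_revPrefix (w : ℕ → α) (n : ℕ) : (revPrefix w n).length = n := by
  induction n with
  | zero => rfl
  | succ n ih => simp [revPrefix, ih]

theorem getElem_revPrefix (w : ℕ → α) {n j : ℕ} (hj : j < (revPrefix w n).length) :
    (revPrefix w n)[j] = w (n - 1 - j) := by
  induction n generalizing j with
  | zero => simp at hj
  | succ n ih =>
    cases j with
    | zero => simp [revPrefix]
    | succ j => simp only [revPrefix, List.getElem_cons_succ, ih]; congr 1; omega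

variable [DecidableEq α]

def hasSquarePrefix (l : List α) : Bool :=
  (List.range (l.length / 2)).any fun k => l.take (k + 1) == (l.drop (k + 1)).take (k + 1)

/-- Whether the reversed word `l` extends by `d` letters, the letter at position `n` taken from
`A n`, without creating a square. -/
def hasSquareFreeExtension (A : ℕ → List α) : ℕ → List α → Bool
  | 0, _ => true
  | d + 1, l => (A l.length).any fun a =>
      !hasSquarePrefix (a :: l) && hasSquareFreeExtension A d (a :: l)

variable {w : ℕ → α}

theorem hasSquarePrefix_revPrefix (hw : InfSqFree w) (n : ℕ) :
    hasSquarePrefix (revPrefix w n) = false := by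
  simp only [hasSquarePrefix, List.any_eq_false, List.mem_range, length_revPrefix, beq_iff_eq]
  intro k hk hsq
  obtain ⟨i, hi, hne⟩ := hw (n - 2 * (k + 1)) (k + 1) k.succ_pos
  have := congrArg (·[k - i]?) hsq
  simp only [List.getElem?_take, List.getElem?_drop, show k - i < k + 1 by omega, if_true,
    List.getElem?_eq_getElem (by rw [length_revPrefix]; omega : k - i < (revPrefix w n).length),
    List.getElem?_eq_getElem (by rw [length_revPrefix]; omega : k + 1 + (k - i) < (revPrefix w n).length),
    getElem_revPrefix, Option.some.injEq] at this
  apply hne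
  convert this.symm using 2 <;> omega

theorem hasSquareFreeExtension_revPrefix {A : ℕ → List α} (hw : InfSqFree w)
    (hA : ∀ n, w n ∈ A n) (d n : ℕ) :
    hasSquareFreeExtension A d (revPrefix w n) = true := by
  induction d generalizing n with
  | zero => rfl
  | succ d ih =>
    simp only [hasSquareFreeExtension, List.any_eq_true, Bool.and_eq_true, Bool.not_eq_true',
      length_revPrefix]
    exact ⟨w n, hA n, hasSquarePrefix_revPrefix hw (n + 1), ih (n + 1)⟩

theorem not_infSqFree_of_hasSquareFreeExtension_eq_false {A : ℕ → List α} {d : ℕ}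
    (hd : hasSquareFreeExtension A d [] = false) (hA : ∀ n, w n ∈ A n) : ¬ InfSqFree w :=
  fun hw => by simpa [revPrefix, hd] using hasSquareFreeExtension_revPrefix hw hA d 0

end Search

section ThreeColours

open Fin.NatCast

theorem c4Adj_iff (a b : Fin 4) : C4Adj a b ↔ b = a + 1 ∨ b = a + 3 := by
  unfold C4Adj; revert a b; decide

theorem eq_add_or_eq_add_add_two_of_c4Adj {u : ℕ → Fin 4} (hu : ∀ n, C4Adj (u n) (u (n + 1)))
    (n : ℕ) : u n = u 0 + n ∨ u n = u 0 + n + 2 := by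
  induction n with
  | zero => simp
  | succ n ih =>
    push_cast
    rcases (c4Adj_iff _ _).1 (hu n) with h | h <;> grind

theorem hasSquareFreeExtension_sixteen_eq_false (ψ : Fin 4 → Fin 3) :
    hasSquareFreeExtension (fun n : ℕ => [ψ n, ψ (n + 2)]) 16 [] = false := by
  revert ψ; decide

theorem not_infSqFree_comp_of_c4Adj (φ : Fin 4 → Fin 3) {u : ℕ → Fin 4}
    (hu : ∀ n, C4Adj (u n) (u (n + 1))) : ¬ InfSqFree (fun n => φ (u n)) := by
  refine not_infSqFree_of_hasSquareFreeExtension_eq_false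
    (hasSquareFreeExtension_sixteen_eq_false fun v => φ (u 0 + v)) fun n => ?_
  rcases eq_add_or_eq_add_add_two_of_c4Adj hu n with h | h <;> simp [h, add_assoc]

end ThreeColours

section FourColours

def twosParity (n : ℕ) : ZMod 2 := (Nat.digits 3 n).count 2

theorem twosParity_three_mul_add {r : ℕ} (hr : r < 3) (n : ℕ) :
    twosParity (3 * n + r) = twosParity n + if r = 2 then 1 else 0 := by
  rcases Nat.eq_zero_or_pos n with rfl | hn
  · interval_cases r <;> decide
  · rw [twosParity, add_comm, Nat.digits_add 3 (by norm_num) r n hr (Or.inr hn.ne')]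
    simp [twosParity, List.count_cons, beq_iff_eq]

theorem twosParity_three_mul (n : ℕ) : twosParity (3 * n) = twosParity n := by
  simpa using twosParity_three_mul_add (r := 0) (by norm_num) n

theorem twosParity_succ_of_mod_three_eq_zero {j : ℕ} (hj : j % 3 = 0) :
    twosParity (j + 1) = twosParity j := by
  obtain ⟨n, rfl⟩ : 3 ∣ j := Nat.dvd_of_mod_eq_zero hj
  rw [twosParity_three_mul, twosParity_three_mul_add (by norm_num)]; simp

theorem twosParity_succ_of_mod_three_eq_one {j : ℕ} (hj : j % 3 = 1) :
    twosParity (j + 1) = twosParity j + 1 := by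
  obtain ⟨n, rfl⟩ : ∃ n, j = 3 * n + 1 := ⟨j / 3, by omega⟩
  rw [twosParity_three_mul_add (r := 2) (by norm_num), twosParity_three_mul_add (by norm_num)]
  simp

theorem twosParity_add_two_ne_of_mod_three_eq_zero {j : ℕ} (hj : j % 3 = 0) :
    twosParity (j + 2) ≠ twosParity j := by
  rw [twosParity_succ_of_mod_three_eq_one (by omega), twosParity_succ_of_mod_three_eq_zero hj]
  simp

theorem twosParity_succ_ne_of_mod_three {j j' : ℕ} (hj : j % 3 = 0) (hj' : j' % 3 = 1)
    (h : twosParity j = twosParity j') : twosParity (j + 1) ≠ twosParity (j' + 1) := by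
  rw [twosParity_succ_of_mod_three_eq_zero hj, twosParity_succ_of_mod_three_eq_one hj', h]
  simp

theorem twosParity_no_even_square (k : ℕ) (hk : Even k) (hk0 : 0 < k) (m : ℕ) :
    ∃ i < k, twosParity (m + i) ≠ twosParity (m + k + i) := by
  induction k using Nat.strong_induction_on generalizing m with
  | _ k ih =>
  rw [Nat.even_iff] at hk
  by_contra! H
  have hsq (i : ℕ) (hi : i + 1 < k) : twosParity (m + i) = twosParity (m + k + i) ∧
      twosParity (m + i + 1) = twosParity (m + k + i + 1) :=
    ⟨H i (by omega), H (i + 1) hi⟩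
  rcases (show k % 3 = 0 ∨ k % 3 = 1 ∨ k % 3 = 2 by omega) with hk3 | hk3 | hk3
  · -- a square of half-length `3 k'` contains one of half-length `k'` at the positions `≡ 0 mod 3`
    obtain ⟨i, hi, hne⟩ := ih (k / 3) (by omega) (by rw [Nat.even_iff]; omega) (by omega)
      ((m + 2) / 3)
    apply hne
    have := H (3 * ((m + 2) / 3 + i) - m) (by omega)
    rwa [show m + (3 * ((m + 2) / 3 + i) - m) = 3 * ((m + 2) / 3 + i) by omega,
      show m + k + (3 * ((m + 2) / 3 + i) - m) = 3 * ((m + 2) / 3 + k / 3 + i) by omega,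
      twosParity_three_mul, twosParity_three_mul] at this
  · obtain ⟨h0, h1⟩ := hsq ((3 - m % 3) % 3) (by omega)
    exact twosParity_succ_ne_of_mod_three (by omega) (by omega) h0 h1
  · by_cases hi : (4 - m % 3) % 3 + 1 < k
    · obtain ⟨h0, h1⟩ := hsq ((4 - m % 3) % 3) hi
      exact twosParity_succ_ne_of_mod_three (by omega) (by omega) h0.symm h1.symm
    obtain rfl : k = 2 := by omega
    rcases (show m % 3 = 0 ∨ m % 3 = 2 by omega) with hm | hm
    · exact twosParity_add_two_ne_of_mod_three_eq_zero hm (H 0 (by omega)).symm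
    · exact twosParity_add_two_ne_of_mod_three_eq_zero (j := m + 1) (by omega) (H 1 (by omega)).symm

def c4Walk (n : ℕ) : Fin 4 :=
  ⟨n % 2 + 2 * (twosParity n).val, by have := ZMod.val_lt (twosParity n); omega⟩

theorem c4Adj_c4Walk (n : ℕ) : C4Adj (c4Walk n) (c4Walk (n + 1)) := by
  have := ZMod.val_lt (twosParity n)
  have := ZMod.val_lt (twosParity (n + 1))
  simp only [C4Adj, c4Walk]
  omega

theorem c4Walk_eq_iff {a b : ℕ} :
    c4Walk a = c4Walk b ↔ a % 2 = b % 2 ∧ twosParity a = twosParity b := by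
  have := ZMod.val_lt (twosParity a)
  have := ZMod.val_lt (twosParity b)
  rw [c4Walk, c4Walk, Fin.mk.injEq, ← (ZMod.val_injective 2).eq_iff]
  omega

theorem infSqFree_c4Walk : InfSqFree c4Walk := by
  intro m k hk
  by_contra! H
  have hk2 : Even k := Nat.even_iff.2 (by have := (c4Walk_eq_iff.1 (H 0 hk)).1; omega)
  obtain ⟨i, hi, hne⟩ := twosParity_no_even_square k hk2 hk m
  exact hne (c4Walk_eq_iff.1 (H i hi)).2

end FourColours

/-- `γ(C₄) = 4`: no 3-colouring of `C₄` admits an infinite walk with square-free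
colour sequence, while with 4 colours (the identity colouring) an infinite
square-free walk exists. -/
theorem colour_number_C4_eq_four :
    (¬ ∃ (φ : Fin 4 → Fin 3) (u : ℕ → Fin 4),
        (∀ n, C4Adj (u n) (u (n + 1))) ∧ InfSqFree (fun n => φ (u n))) ∧
    (∃ u : ℕ → Fin 4, (∀ n, C4Adj (u n) (u (n + 1))) ∧ InfSqFree u) :=
  ⟨fun ⟨φ, _, hu, hsf⟩ => not_infSqFree_comp_of_c4Adj φ hu hsf,
    ⟨c4Walk, c4Adj_c4Walk, infSqFree_c4Walk⟩⟩
end
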